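/- Any Palais–Smale sequence (u_n) for I at level c is bounded in D^{s,2}(ℝ³): there exists C such that ‖u_n‖_{D^{s,2}} ≤ C for all n. -/

import Mathlib

noncomputable section

open MeasureTheory Real Filter Topology Set

/-- ℝ³ as a Euclidean space. -/
abbrev R3 := EuclideanSpace ℝ (Fin 3)

/-- Normalization constant of the fractional Laplacian of order `σ` in dimension 3. -/
noncomputable def cFrac (sigma : ℝ) : ℝ :=
  2 ^ (2 * sigma) * Real.pi ^ (-(3 : ℝ) / 2) * Real.Gamma ((3 + 2 * sigma) / 2) /
    |Real.Gamma (-sigma)|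

/-- The fractional Laplacian `(-Δ)^σ u` on ℝ³ (singular integral formula). -/
noncomputable def fracLap (sigma : ℝ) (u : R3 → ℝ) (x : R3) : ℝ :=
  cFrac sigma * ∫ y, (u x - u y) / ‖x - y‖ ^ (3 + 2 * sigma)

/-- Squared `D^{s,2}` norm: `∫ |(-Δ)^{s/2} u|²`. -/
noncomputable def dNorm2 (s : ℝ) (u : R3 → ℝ) : ℝ :=
  ∫ x, (fracLap (s / 2) u x) ^ 2

/-- The `D^{s,2}` norm. -/
noncomputable def dNorm (s : ℝ) (u : R3 → ℝ) : ℝ :=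
  Real.sqrt (dNorm2 s u)

/-- Inner product on `D^{s,2}`: `∫ (-Δ)^{s/2}u · (-Δ)^{s/2}v`. -/
noncomputable def dInner (s : ℝ) (u v : R3 → ℝ) : ℝ :=
  ∫ x, fracLap (s / 2) u x * fracLap (s / 2) v x

/-- The `L^p` norm of `u` for a real exponent `p`. -/
noncomputable def lpNorm (p : ℝ) (u : R3 → ℝ) : ℝ :=
  (∫ x, |u x| ^ p) ^ (1 / p)

/-- The best constant `S_s` of the Sobolev embedding `D^{s,2}(ℝ³) ↪ L^{2*_s}(ℝ³)`. -/
noncomputable def Sconst (s : ℝ) : ℝ :=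
  sInf {r : ℝ | ∃ u : R3 → ℝ, u ≠ 0 ∧ r = dNorm2 s u / (lpNorm (6 / (3 - 2 * s)) u) ^ 2}

/-- The full energy functional `I` associated to the fractional Schrödinger–Poisson problem,
with `phi u` the solution of the Poisson part. -/
noncomputable def energy (s : ℝ) (V K : R3 → ℝ) (phi : (R3 → ℝ) → R3 → ℝ) (u : R3 → ℝ) : ℝ :=
  1 / 2 * (dNorm2 s u + ∫ x, V x * (u x) ^ 2) + 1 / 4 * (∫ x, K x * phi u x * (u x) ^ 2) -
    (3 - 2 * s) / 6 * ∫ x, |u x| ^ (6 / (3 - 2 * s))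

/-- The Nehari functional `⟨I'(u), u⟩`. -/
noncomputable def nehariVal (s : ℝ) (V K : R3 → ℝ) (phi : (R3 → ℝ) → R3 → ℝ)
    (u : R3 → ℝ) : ℝ :=
  dNorm2 s u + (∫ x, V x * (u x) ^ 2) + (∫ x, K x * phi u x * (u x) ^ 2) -
    ∫ x, |u x| ^ (6 / (3 - 2 * s))

/-- The derivative pairing `⟨I'(u), v⟩` of the full energy functional. -/
noncomputable def energyDeriv (s : ℝ) (V K : R3 → ℝ) (phi : (R3 → ℝ) → R3 → ℝ)
    (u v : R3 → ℝ) : ℝ :=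
  dInner s u v + (∫ x, V x * u x * v x) + (∫ x, K x * phi u x * u x * v x) -
    ∫ x, |u x| ^ (6 / (3 - 2 * s) - 2) * u x * v x

/-
The Poisson term enters `I` with weight `1/4` and `⟨I'(u), u⟩` with weight `1`, so it cancels in
`I(u) - ⟨I'(u), u⟩ / 4`; since `2*_s ≥ 4` what remains is at least `‖u‖²/4`. For a
Palais–Smale sequence this gives `‖u_n‖²/4 ≤ c + 1 + ‖u_n‖/4` for large `n`, a quadratic bound.
-/

theorem Real.abs_rpow_sub_two_mul_self_mul_self {p : ℝ} (hp : p ≠ 0) (t : ℝ) :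
    |t| ^ (p - 2) * t * t = |t| ^ p := by
  rw [mul_assoc, ← abs_mul_abs_self, ← sq, ← Real.rpow_two,
    ← Real.rpow_add' (abs_nonneg t) (by simpa using hp), sub_add_cancel]

theorem Real.le_two_mul_add_one_of_le_add_sqrt {x a : ℝ} (hx : 0 ≤ x) (h : x ≤ a + √x) :
    x ≤ 2 * a + 1 := by
  nlinarith [Real.sq_sqrt hx, sq_nonneg (√x - 1)]

section PalaisSmale

theorem dNorm2_nonneg (s : ℝ) (u : R3 → ℝ) : 0 ≤ dNorm2 s u :=
  integral_nonneg fun _ => sq_nonneg _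

theorem dInner_self (s : ℝ) (u : R3 → ℝ) : dInner s u u = dNorm2 s u := by
  simp only [dInner, dNorm2, sq]

theorem energy_sub_quarter_nehariVal (s : ℝ) (V K : R3 → ℝ) (phi : (R3 → ℝ) → R3 → ℝ)
    (u : R3 → ℝ) :
    energy s V K phi u - 1 / 4 * nehariVal s V K phi u =
      1 / 4 * (dNorm2 s u + ∫ x, V x * (u x) ^ 2) +
        (1 / 4 - (3 - 2 * s) / 6) * ∫ x, |u x| ^ (6 / (3 - 2 * s)) := by
  simp only [energy, nehariVal]
  ring

variable {s : ℝ} {V K : R3 → ℝ} {phi : (R3 → ℝ) → R3 → ℝ} {u : R3 → ℝ}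

theorem energyDeriv_self (hs : 3 - 2 * s ≠ 0) :
    energyDeriv s V K phi u u = nehariVal s V K phi u := by
  have hp : 6 / (3 - 2 * s) ≠ 0 := div_ne_zero (by norm_num) hs
  simp only [energyDeriv, nehariVal, dInner_self, mul_assoc,
    Real.abs_rpow_sub_two_mul_self_mul_self hp, ← sq]

theorem quarter_dNorm2_le_energy_sub_quarter_nehariVal (hV : ∀ x, 0 ≤ V x) (hs : 3 / 4 ≤ s) :
    1 / 4 * dNorm2 s u ≤ energy s V K phi u - 1 / 4 * nehariVal s V K phi u := by
  have hV_int : 0 ≤ ∫ x, V x * (u x) ^ 2 := integral_nonneg fun x => mul_nonneg (hV x) (sq_nonneg _)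
  have hp_int : 0 ≤ ∫ x, |u x| ^ (6 / (3 - 2 * s)) := integral_nonneg fun x => by positivity
  have hcoef : 0 ≤ 1 / 4 - (3 - 2 * s) / 6 := by linarith
  rw [energy_sub_quarter_nehariVal]
  nlinarith [mul_nonneg hcoef hp_int]

theorem dNorm_le_of_energy_le_of_neg_dNorm_le_nehariVal (hV : ∀ x, 0 ≤ V x) (hs : 3 / 4 ≤ s)
    {M : ℝ} (hE : energy s V K phi u ≤ M) (hN : -dNorm s u ≤ nehariVal s V K phi u) :
    dNorm s u ≤ √(8 * M + 1) := by
  have hD := dNorm2_nonneg s u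
  have h4 : dNorm2 s u ≤ 4 * M + √(dNorm2 s u) := by
    have := quarter_dNorm2_le_energy_sub_quarter_nehariVal (K := K) (phi := phi) (u := u) hV hs
    unfold dNorm at hN
    linarith
  have h8 := Real.le_two_mul_add_one_of_le_add_sqrt hD h4
  exact Real.sqrt_le_sqrt (by linarith)

end PalaisSmale

theorem stmt14_general (s : ℝ) (hs : 3 / 4 < s ∧ s ≤ 1) (V K : R3 → ℝ)
    (hV0 : ∀ x, 0 ≤ V x)
    (phi : (R3 → ℝ) → R3 → ℝ)
    (c : ℝ) (u : ℕ → R3 → ℝ)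
    (hPS1 : Tendsto (fun n => energy s V K phi (u n)) atTop (nhds c))
    (hPS2 : ∀ ε > (0 : ℝ), ∃ N : ℕ, ∀ n ≥ N, ∀ v : R3 → ℝ,
      |energyDeriv s V K phi (u n) v| ≤ ε * dNorm s v) :
    ∃ C : ℝ, ∀ n, dNorm s (u n) ≤ C := by
  obtain ⟨N, hN⟩ := hPS2 1 one_pos
  have h_energy : ∀ᶠ n in atTop, energy s V K phi (u n) ≤ c + 1 :=
    hPS1.eventually (eventually_le_nhds (lt_add_one c))
  have h_nehari : ∀ᶠ n in atTop, -dNorm s (u n) ≤ nehariVal s V K phi (u n) := by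
    refine eventually_atTop.2 ⟨N, fun n hn => ?_⟩
    rw [← energyDeriv_self (by linarith [hs.2] : 0 < 3 - 2 * s).ne']
    exact neg_le_of_abs_le (by simpa using hN n hn (u n))
  have h_bound : ∀ᶠ n in atTop, dNorm s (u n) ≤ √(8 * (c + 1) + 1) :=
    (h_energy.and h_nehari).mono fun n h =>
      dNorm_le_of_energy_le_of_neg_dNorm_le_nehariVal hV0 hs.1.le h.1 h.2
  obtain ⟨C, hC⟩ := (isBoundedUnder_of_eventually_le h_bound).bddAbove_range
  exact ⟨C, fun n => hC (mem_range_self n)⟩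

/-- every Palais–Smale sequence for `I` at level `c` is bounded in `D^{s,2}`. -/
theorem stmt14 (s : ℝ) (hs : 3 / 4 < s ∧ s ≤ 1) (V K : R3 → ℝ)
    (hV0 : ∀ x, 0 ≤ V x) (hK0 : ∀ x, 0 ≤ K x)
    (hV : MemLp V (ENNReal.ofReal (3 / (2 * s))))
    (hK : MemLp K (ENNReal.ofReal (6 / (6 * s - 3))))
    (phi : (R3 → ℝ) → R3 → ℝ)
    (hphi : ∀ w v : R3 → ℝ, dInner s (phi w) v = ∫ x, K x * (w x) ^ 2 * v x)
    (c : ℝ) (u : ℕ → R3 → ℝ)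
    (hPS1 : Tendsto (fun n => energy s V K phi (u n)) atTop (nhds c))
    (hPS2 : ∀ ε > (0 : ℝ), ∃ N : ℕ, ∀ n ≥ N, ∀ v : R3 → ℝ,
      |energyDeriv s V K phi (u n) v| ≤ ε * dNorm s v) :
    ∃ C : ℝ, ∀ n, dNorm s (u n) ≤ C :=
  stmt14_general s hs V K hV0 phi c u hPS1 hPS2
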